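/- If in addition ‖x − y‖ ≤ D for all x, y ∈ dom h (for some D > 0), then t_i ≤ λ(16M_f² + L_f²D²)/(4(1−χ)), with no restriction on the stepsize λ > 0. -/

import Mathlib

open scoped RealInnerProductSpace

lemma gauss_sum_real (k : ℕ) :
    ∑ j ∈ Finset.range k, ((j : ℝ) + 1) = k * (k + 1) / 2 := by
  induction k with
  | zero => simp
  | succ m ih => rw [Finset.sum_range_succ, ih]; push_cast; ring

lemma hybrid_descent_bound
    {n : ℕ} (f : EuclideanSpace ℝ (Fin n) → ℝ)
    (domf domh : Set (EuclideanSpace ℝ (Fin n)))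
    (f' : EuclideanSpace ℝ (Fin n) → EuclideanSpace ℝ (Fin n))
    (Mf Lf : ℝ) (hLf : 0 ≤ Lf)
    (hsub : domh ⊆ domf) (hconvh : Convex ℝ domh)
    (horacle : ∀ x ∈ domh, ∀ u ∈ domf, f x + ⟪f' x, u - x⟫ ≤ f u)
    (hhybrid : ∀ x ∈ domh, ∀ y ∈ domh, ‖f' x - f' y‖ ≤ 2 * Mf + Lf * ‖x - y‖)
    (xhat xi : EuclideanSpace ℝ (Fin n)) (hxhat : xhat ∈ domh) (hxi : xi ∈ domh) :
    f xi ≤ f xhat + ⟪f' xhat, xi - xhat⟫ + 2 * Mf * ‖xi - xhat‖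
      + Lf / 2 * ‖xi - xhat‖ ^ 2 := by
  set d := xi - xhat with hd
  set r := ‖d‖ with hr
  have hr0 : (0:ℝ) ≤ r := norm_nonneg _
  set A := ⟪f' xhat, d⟫ with hA
  -- discretized bound
  have key : ∀ k : ℕ, 1 ≤ k →
      f xi - f xhat - A ≤ 2 * Mf * r + Lf * r ^ 2 * (((k:ℝ) + 1) / (2 * k)) := by
    intro k hk
    have hk0 : (0:ℝ) < (k:ℝ) := by exact_mod_cast hk
    set z : ℕ → EuclideanSpace ℝ (Fin n) := fun j => xhat + ((j:ℝ) / (k:ℝ)) • d with hz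
    have hzmem : ∀ j : ℕ, j ≤ k → z j ∈ domh := by
      intro j hj
      have h1 : (0:ℝ) ≤ (j:ℝ) / k := by positivity
      have h2 : (j:ℝ) / k ≤ 1 := by
        rw [div_le_one hk0]; exact_mod_cast hj
      have hm := hconvh hxhat hxi (by linarith : (0:ℝ) ≤ 1 - (j:ℝ)/k) h1 (by ring)
      have : z j = (1 - (j:ℝ)/k) • xhat + ((j:ℝ)/k) • xi := by
        simp only [hz, hd]; module
      rw [this]; exact hm
    have step : ∀ j ∈ Finset.range k,
        f (z (j+1)) - f (z j)
          ≤ (1/(k:ℝ)) * (A + 2*Mf*r + Lf * r^2 * (((j:ℝ)+1)/k)) := by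
      intro j hj
      have hjk : j < k := Finset.mem_range.mp hj
      have mem1 : z (j+1) ∈ domh := hzmem (j+1) hjk
      have mem0 : z j ∈ domf := hsub (hzmem j hjk.le)
      have horc := horacle (z (j+1)) mem1 (z j) mem0
      have hdiff : z j - z (j+1) = (-(1/(k:ℝ))) • d := by
        have hcoef : ((j:ℝ)/k) - (((j:ℝ)+1)/k) = -(1/(k:ℝ)) := by
          field_simp; ring
        simp only [hz]
        push_cast
        rw [show xhat + ((j:ℝ)/k) • d - (xhat + (((j:ℝ)+1)/k) • d)
            = (((j:ℝ)/k) - (((j:ℝ)+1)/k)) • d by module, hcoef]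
      rw [hdiff, real_inner_smul_right] at horc
      -- horc : f (z (j+1)) + (-(1/k)) * ⟪f' (z (j+1)), d⟫ ≤ f (z j)
      have hinner : ⟪f' (z (j+1)), d⟫ ≤ A + (2*Mf + Lf * (((j:ℝ)+1)/k * r)) * r := by
        have hsplit : ⟪f' (z (j+1)), d⟫ = A + ⟪f' (z (j+1)) - f' xhat, d⟫ := by
          rw [inner_sub_left]; ring
        have hcs : ⟪f' (z (j+1)) - f' xhat, d⟫ ≤ ‖f' (z (j+1)) - f' xhat‖ * r :=
          real_inner_le_norm _ _
        have hnorm : ‖z (j+1) - xhat‖ = ((j:ℝ)+1)/k * r := by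
          have : z (j+1) - xhat = (((j:ℝ)+1)/k) • d := by
            simp only [hz]; push_cast; module
          rw [this, norm_smul, Real.norm_eq_abs, abs_of_nonneg (by positivity)]
        have hhyb := hhybrid (z (j+1)) mem1 xhat hxhat
        rw [hnorm] at hhyb
        have := mul_le_mul_of_nonneg_right hhyb hr0
        calc ⟪f' (z (j+1)), d⟫ = A + ⟪f' (z (j+1)) - f' xhat, d⟫ := hsplit
          _ ≤ A + ‖f' (z (j+1)) - f' xhat‖ * r := by linarith
          _ ≤ A + (2*Mf + Lf * (((j:ℝ)+1)/k * r)) * r := by linarith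
      have hk0' : (0:ℝ) < 1/(k:ℝ) := by positivity
      have := mul_le_mul_of_nonneg_left hinner hk0'.le
      calc f (z (j+1)) - f (z j) ≤ (1/(k:ℝ)) * ⟪f' (z (j+1)), d⟫ := by linarith
        _ ≤ (1/(k:ℝ)) * (A + (2*Mf + Lf * (((j:ℝ)+1)/k * r)) * r) := this
        _ = (1/(k:ℝ)) * (A + 2*Mf*r + Lf * r^2 * (((j:ℝ)+1)/k)) := by ring
    have hsum := Finset.sum_le_sum step
    rw [Finset.sum_range_sub (fun j => f (z j))] at hsum
    have hz0 : z 0 = xhat := by simp [hz]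
    have hzk : z k = xi := by
      simp only [hz, div_self hk0.ne', one_smul, hd]
      abel
    rw [hz0, hzk] at hsum
    have hrhs : ∑ j ∈ Finset.range k, (1/(k:ℝ)) * (A + 2*Mf*r + Lf * r^2 * (((j:ℝ)+1)/k))
        = A + 2*Mf*r + Lf * r^2 * (((k:ℝ) + 1) / (2 * k)) := by
      have expand : ∀ j ∈ Finset.range k,
          (1/(k:ℝ)) * (A + 2*Mf*r + Lf * r^2 * (((j:ℝ)+1)/k))
          = (1/(k:ℝ)) * (A + 2*Mf*r) + (Lf * r^2 / (k:ℝ)^2) * ((j:ℝ)+1) := by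
        intro j _; field_simp
      rw [Finset.sum_congr rfl expand, Finset.sum_add_distrib, Finset.sum_const,
        Finset.card_range, ← Finset.mul_sum, gauss_sum_real]
      simp only [nsmul_eq_mul]
      field_simp
    rw [hrhs] at hsum
    linarith
  -- limit k → ∞
  set c := f xi - f xhat - A - (2*Mf*r + Lf * r^2 / 2) with hc
  have hcle : ∀ k : ℕ, 1 ≤ k → c ≤ (Lf * r^2 / 2) / k := by
    intro k hk
    have hk0 : (0:ℝ) < (k:ℝ) := by exact_mod_cast hk
    have := key k hk
    have heq : Lf * r ^ 2 * (((k:ℝ) + 1) / (2 * k)) = Lf * r^2/2 + (Lf * r^2 / 2) / k := by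
      field_simp
    rw [heq] at this
    simp only [hc]
    linarith
  have hb0 : (0:ℝ) ≤ Lf * r^2 / 2 := by positivity
  have hcneg : c ≤ 0 := by
    by_contra hpos
    push_neg at hpos
    obtain ⟨k, hkgt⟩ := exists_nat_gt ((Lf * r^2 / 2) / c)
    have hk1 : 1 ≤ k := by
      by_contra hk1
      push_neg at hk1
      interval_cases k
      · have : (0:ℝ) ≤ (Lf * r^2 / 2) / c := by positivity
        simp at hkgt; linarith
    have hk0 : (0:ℝ) < (k:ℝ) := by exact_mod_cast hk1
    have h1 := hcle k hk1
    have h2 : Lf * r^2 / 2 < k * c := (div_lt_iff₀ hpos).mp hkgt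
    have h3 : (Lf * r^2 / 2) / k < c := by
      rw [div_lt_iff₀ hk0]; linarith
    linarith
  simp only [hc] at hcneg
  linarith

/-- Lemma `lem:tj2`(b): at the first iteration `i` of a cycle of U-PB,
if `dom h` has diameter at most `D`, then `t_i ≤ λ(16M_f² + L_f²D²)/(4(1−χ))` for any stepsize. -/
theorem upb_first_gap_bound_bounded_domain
    {n : ℕ} (f h : EuclideanSpace ℝ (Fin n) → ℝ)
    (domf domh : Set (EuclideanSpace ℝ (Fin n)))
    (f' : EuclideanSpace ℝ (Fin n) → EuclideanSpace ℝ (Fin n))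
    (Mf Lf : ℝ) (hMf : 0 ≤ Mf) (hLf : 0 ≤ Lf)
    (hsub : domh ⊆ domf)
    (hfconv : ConvexOn ℝ domf f) (hhconv : ConvexOn ℝ domh h)
    (hflsc : LowerSemicontinuousOn f domf) (hhlsc : LowerSemicontinuousOn h domh)
    (horacle : ∀ x ∈ domh, ∀ u ∈ domf, f x + ⟪f' x, u - x⟫ ≤ f u)
    (hhybrid : ∀ x ∈ domh, ∀ y ∈ domh, ‖f' x - f' y‖ ≤ 2 * Mf + Lf * ‖x - y‖)
    (χ lam : ℝ) (hχ0 : 0 ≤ χ) (hχ1 : χ < 1) (hlam : 0 < lam)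
    (xhat : EuclideanSpace ℝ (Fin n)) (hxhat : xhat ∈ domh)
    (fi : EuclideanSpace ℝ (Fin n) → ℝ)
    (hficonv : ConvexOn ℝ domf fi)
    (hfilow : ∀ u ∈ domf, f xhat + ⟪f' xhat, u - xhat⟫ ≤ fi u)
    (hfile : ∀ u ∈ domf, fi u ≤ f u)
    (xi : EuclideanSpace ℝ (Fin n)) (hxi : xi ∈ domh)
    (hximin : ∀ u ∈ domh,
      fi xi + h xi + ‖xi - xhat‖ ^ 2 / (2 * lam)
        ≤ fi u + h u + ‖u - xhat‖ ^ 2 / (2 * lam))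
    (ti : ℝ)
    (hti : ti = f xi + h xi + χ / (2 * lam) * ‖xi - xhat‖ ^ 2
      - (fi xi + h xi + ‖xi - xhat‖ ^ 2 / (2 * lam)))
    (D : ℝ) (hD : 0 < D) (hdiam : ∀ a ∈ domh, ∀ b ∈ domh, ‖a - b‖ ≤ D) :
    ti ≤ lam * (16 * Mf ^ 2 + Lf ^ 2 * D ^ 2) / (4 * (1 - χ)) := by
  have hχ : (0:ℝ) < 1 - χ := by linarith
  set r := ‖xi - xhat‖ with hr
  have hr0 : (0:ℝ) ≤ r := norm_nonneg _
  have hrD : r ≤ D := hdiam xi hxi xhat hxhat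
  have hdesc := hybrid_descent_bound f domf domh f' Mf Lf hLf hsub hhconv.1
    horacle hhybrid xhat xi hxhat hxi
  have hlow := hfilow xi (hsub hxi)
  -- f xi - fi xi ≤ 2 Mf r + Lf/2 r^2
  have hgap : f xi - fi xi ≤ 2 * Mf * r + Lf / 2 * r ^ 2 := by
    rw [← hr] at hdesc
    linarith
  have hti2 : ti * (2 * lam) = (f xi - fi xi) * (2 * lam) - (1 - χ) * r ^ 2 := by
    rw [hti]; field_simp; ring
  have hgap2 : f xi - fi xi ≤ (2 * Mf + Lf * D / 2) * r := by
    have hdr : r * r ≤ D * r := mul_le_mul_of_nonneg_right hrD hr0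
    nlinarith
  have hC : 4 * lam * (1 - χ) * (f xi - fi xi)
      ≤ 4 * lam * (1 - χ) * ((2 * Mf + Lf * D / 2) * r) :=
    mul_le_mul_of_nonneg_left hgap2 (by positivity)
  have main : ti * (2 * lam) * (2 * (1 - χ)) ≤ lam * (16 * Mf ^ 2 + Lf ^ 2 * D ^ 2) * lam := by
    nlinarith [sq_nonneg ((2 * Mf + Lf * D / 2) * lam - (1 - χ) * r),
      sq_nonneg ((4 * Mf - Lf * D) * lam), hti2, hC]
  rw [le_div_iff₀ (by positivity : (0:ℝ) < 4 * (1 - χ))]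
  have main' : ti * (4 * (1 - χ)) * lam ≤ lam * (16 * Mf ^ 2 + Lf ^ 2 * D ^ 2) * lam := by
    nlinarith [main]
  exact le_of_mul_le_mul_right main' hlam
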